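/- Let x > 0 be real, α ∈ ℂ, and let k, l₁, l₂ be integers with l₁ + l₂ ≥ 0. Then ∫_{γ_{l₁−k, l₂+k}} e^{−x cosh t − αt} dt = e^{−2kαπi}·∫_{γ_{l₁,l₂}} e^{−x cosh t − αt} dt. -/
import Mathlib


open MeasureTheory

lemma key_shift (x : ℝ) (α : ℂ) (k : ℤ) (t : ℂ) :
    Complex.exp (-(x : ℂ) * Complex.cosh (t + 2 * (k : ℂ) * (Real.pi : ℂ) * Complex.I)
        - α * (t + 2 * (k : ℂ) * (Real.pi : ℂ) * Complex.I)) =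
      Complex.exp (-2 * (k : ℂ) * α * (Real.pi : ℂ) * Complex.I) *
        Complex.exp (-(x : ℂ) * Complex.cosh t - α * t) := by
  have hs : Complex.sin ((k : ℂ) * (2 * Real.pi)) = 0 := by
    have := Complex.sin_int_mul_pi (2 * k)
    push_cast at this
    rw [show (k : ℂ) * (2 * (Real.pi : ℂ)) = 2 * k * Real.pi by ring]
    exact this
  have hc : Complex.cosh (t + 2 * (k : ℂ) * (Real.pi : ℂ) * Complex.I) = Complex.cosh t := by
    have h1 : (2 : ℂ) * (k : ℂ) * (Real.pi : ℂ) * Complex.I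
        = ((k : ℂ) * (2 * Real.pi)) * Complex.I := by ring
    rw [h1, Complex.cosh_add, Complex.cosh_mul_I, Complex.sinh_mul_I,
      Complex.cos_int_mul_two_pi, hs]
    ring
  rw [hc, ← Complex.exp_add]
  ring_nf


/-- The integral of `f` over the contour `γ_{l₁,l₂}`, consisting of the horizontal ray
from `−∞ − 2l₁πi` to `−2l₁πi`, the vertical segment from `−2l₁πi` to `2l₂πi`,
and the horizontal ray from `2l₂πi` to `+∞ + 2l₂πi`. -/
noncomputable def contourIntegral (l₁ l₂ : ℤ) (f : ℂ → ℂ) : ℂ :=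
  (∫ s in Set.Iic (0 : ℝ), f ((s : ℂ) - 2 * (l₁ : ℂ) * (Real.pi : ℂ) * Complex.I)) +
  Complex.I * (∫ θ in (-2 * (l₁ : ℝ) * Real.pi)..(2 * (l₂ : ℝ) * Real.pi),
    f ((θ : ℂ) * Complex.I)) +
  (∫ s in Set.Ioi (0 : ℝ), f ((s : ℂ) + 2 * (l₂ : ℂ) * (Real.pi : ℂ) * Complex.I))

theorem contour_integral_shift
    (x : ℝ) (hx : 0 < x) (α : ℂ) (k l₁ l₂ : ℤ) (hl : 0 ≤ l₁ + l₂) :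
    contourIntegral (l₁ - k) (l₂ + k)
        (fun t => Complex.exp (-(x : ℂ) * Complex.cosh t - α * t)) =
      Complex.exp (-2 * (k : ℂ) * α * (Real.pi : ℂ) * Complex.I) *
        contourIntegral l₁ l₂
          (fun t => Complex.exp (-(x : ℂ) * Complex.cosh t - α * t)) := by
  set f : ℂ → ℂ := fun t => Complex.exp (-(x : ℂ) * Complex.cosh t - α * t) with hf
  set c : ℂ := Complex.exp (-2 * (k : ℂ) * α * (Real.pi : ℂ) * Complex.I) with hcdef
  have key' : ∀ t : ℂ, f (t + 2 * (k : ℂ) * (Real.pi : ℂ) * Complex.I) = c * f t :=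
    fun t => key_shift x α k t
  simp only [contourIntegral]
  have hA : (∫ s in Set.Iic (0 : ℝ), f ((s : ℂ) - 2 * ((l₁ - k : ℤ) : ℂ) * (Real.pi : ℂ) * Complex.I))
      = c * ∫ s in Set.Iic (0 : ℝ), f ((s : ℂ) - 2 * (l₁ : ℂ) * (Real.pi : ℂ) * Complex.I) := by
    rw [← integral_const_mul]
    refine integral_congr_ae (Filter.Eventually.of_forall fun s => ?_)
    have harg : (s : ℂ) - 2 * ((l₁ - k : ℤ) : ℂ) * (Real.pi : ℂ) * Complex.I
        = ((s : ℂ) - 2 * (l₁ : ℂ) * (Real.pi : ℂ) * Complex.I)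
          + 2 * (k : ℂ) * (Real.pi : ℂ) * Complex.I := by push_cast; ring
    simp only [harg, key']
  have hC : (∫ s in Set.Ioi (0 : ℝ), f ((s : ℂ) + 2 * ((l₂ + k : ℤ) : ℂ) * (Real.pi : ℂ) * Complex.I))
      = c * ∫ s in Set.Ioi (0 : ℝ), f ((s : ℂ) + 2 * (l₂ : ℂ) * (Real.pi : ℂ) * Complex.I) := by
    rw [← integral_const_mul]
    refine integral_congr_ae (Filter.Eventually.of_forall fun s => ?_)
    have harg : (s : ℂ) + 2 * ((l₂ + k : ℤ) : ℂ) * (Real.pi : ℂ) * Complex.I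
        = ((s : ℂ) + 2 * (l₂ : ℂ) * (Real.pi : ℂ) * Complex.I)
          + 2 * (k : ℂ) * (Real.pi : ℂ) * Complex.I := by push_cast; ring
    simp only [harg, key']
  have hB : (∫ θ in (-2 * ((l₁ - k : ℤ) : ℝ) * Real.pi)..(2 * ((l₂ + k : ℤ) : ℝ) * Real.pi),
        f ((θ : ℂ) * Complex.I))
      = c * ∫ θ in (-2 * (l₁ : ℝ) * Real.pi)..(2 * (l₂ : ℝ) * Real.pi), f ((θ : ℂ) * Complex.I) := by
    have hsub := intervalIntegral.integral_comp_add_right (a := -2 * (l₁ : ℝ) * Real.pi)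
      (b := 2 * (l₂ : ℝ) * Real.pi) (d := 2 * (k : ℝ) * Real.pi)
      (f := fun θ : ℝ => f ((θ : ℂ) * Complex.I))
    have hb1 : -2 * ((l₁ - k : ℤ) : ℝ) * Real.pi
        = -2 * (l₁ : ℝ) * Real.pi + 2 * (k : ℝ) * Real.pi := by push_cast; ring
    have hb2 : 2 * ((l₂ + k : ℤ) : ℝ) * Real.pi
        = 2 * (l₂ : ℝ) * Real.pi + 2 * (k : ℝ) * Real.pi := by push_cast; ring
    rw [hb1, hb2, ← hsub, ← intervalIntegral.integral_const_mul]
    refine intervalIntegral.integral_congr (fun θ _ => ?_)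
    have harg : ((θ + 2 * (k : ℝ) * Real.pi : ℝ) : ℂ) * Complex.I
        = (θ : ℂ) * Complex.I + 2 * (k : ℂ) * (Real.pi : ℂ) * Complex.I := by push_cast; ring
    simp only [harg, key']
  rw [hA, hB, hC]
  ring
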